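/- arXiv:2309.05117 — 4 statements merged into one kernel-verified Lean document; each statement's English description precedes it below -/
import Mathlib

section
/- Let C ≥ 0, let (x_k) and (x̂_k) be sequences in ℝ^n, let (Φ_k) be a sequence of maps ℝ^n → ℝ^n, (A_k) a sequence of n×n real matrices, and (η_k) a sequence of nonnegative reals. Assume for every k: (i) x_{k+1} = x_k + Φ_k(x_k); (ii) x̂_{k+1} = x̂_k + A_k x̂_k; (iii) ‖Φ_k(a) − Φ_k(b)‖ ≤ C‖a − b‖ for all a, b ∈ ℝ^n; (iv) ‖Φ_k(x̂_k) − A_k x̂_k‖ ≤ η_k. Then for every n ≥ 0: ‖x_n − x̂_n‖ ≤ (1 + C)^n · ‖x_0 − x̂_0‖ + Σ_{k=0}^{n−1} (1 + C)^{n−1−k} · η_k. -/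
open scoped Matrix

/-! Splitting `x_{k+1} - x̂_{k+1}` through `Φ_k(x̂_k)` gives the one-step recursion
`e_{k+1} ≤ (1 + C) e_k + η_k` for `e_k = ‖x_k - x̂_k‖`, which the discrete Grönwall
inequality unrolls. -/

open Finset

theorem pow_mul_add_sum_of_le_mul_add {R : Type*} [CommSemiring R] [PartialOrder R]
    [IsOrderedRing R] {u b : ℕ → R} {a : R} (ha : 0 ≤ a) (hu : ∀ k, u (k + 1) ≤ a * u k + b k)
    (N : ℕ) : u N ≤ a ^ N * u 0 + ∑ k ∈ range N, a ^ (N - 1 - k) * b k := by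
  have h := discrete_gronwall_prod_general (n₀ := 0) (c := fun _ ↦ a) (fun k _ ↦ hu k)
    (fun _ _ ↦ ha) N.zero_le
  simp only [prod_const, Nat.card_Ico, ← range_eq_Ico, card_range] at h
  convert h using 2
  · exact mul_comm _ _
  · refine sum_congr rfl fun k _ ↦ ?_
    rw [mul_comm, Nat.sub_sub, add_comm 1 k]

theorem norm_add_sub_add_le_of_norm_sub_le {E : Type*} [SeminormedAddCommGroup E] {f : E → E}
    {C : ℝ} {x y z : E} (hf : ‖f x - f y‖ ≤ C * ‖x - y‖) :
    ‖(x + f x) - (y + z)‖ ≤ (1 + C) * ‖x - y‖ + ‖f y - z‖ :=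
  calc ‖(x + f x) - (y + z)‖ = ‖(x - y) + (f x - f y) + (f y - z)‖ := by abel_nf
    _ ≤ ‖x - y‖ + ‖f x - f y‖ + ‖f y - z‖ := norm_add₃_le
    _ ≤ (1 + C) * ‖x - y‖ + ‖f y - z‖ := by linarith

theorem iterated_error_bound_general {n : ℕ} (C : ℝ) (hC : 0 ≤ C)
    (x xh : ℕ → EuclideanSpace ℝ (Fin n))
    (Φ : ℕ → EuclideanSpace ℝ (Fin n) → EuclideanSpace ℝ (Fin n))
    (A : ℕ → Matrix (Fin n) (Fin n) ℝ) (η : ℕ → ℝ)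
    (hx : ∀ k, x (k + 1) = x k + Φ k (x k))
    (hxh : ∀ k, xh (k + 1) = xh k + (EuclideanSpace.equiv (Fin n) ℝ).symm (A k *ᵥ xh k))
    (hLip : ∀ (k : ℕ) (a b : EuclideanSpace ℝ (Fin n)), ‖Φ k a - Φ k b‖ ≤ C * ‖a - b‖)
    (hmod : ∀ k, ‖Φ k (xh k) - (EuclideanSpace.equiv (Fin n) ℝ).symm (A k *ᵥ xh k)‖ ≤ η k) :
    ∀ N : ℕ, ‖x N - xh N‖ ≤
      (1 + C) ^ N * ‖x 0 - xh 0‖ +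
        ∑ k ∈ Finset.range N, (1 + C) ^ (N - 1 - k) * η k := by
  refine pow_mul_add_sum_of_le_mul_add (by linarith) fun k ↦ ?_
  rw [hx, hxh]
  exact (norm_add_sub_add_le_of_norm_sub_le (hLip k _ _)).trans (by gcongr; exact hmod k)

/-- Iterated (telescoped) pointwise error bound of Proposition 5.1 for time-varying DMD. -/
theorem iterated_error_bound {n : ℕ} (C : ℝ) (hC : 0 ≤ C)
    (x xh : ℕ → EuclideanSpace ℝ (Fin n))
    (Φ : ℕ → EuclideanSpace ℝ (Fin n) → EuclideanSpace ℝ (Fin n))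
    (A : ℕ → Matrix (Fin n) (Fin n) ℝ) (η : ℕ → ℝ) (hη : ∀ k, 0 ≤ η k)
    (hx : ∀ k, x (k + 1) = x k + Φ k (x k))
    (hxh : ∀ k, xh (k + 1) = xh k + (EuclideanSpace.equiv (Fin n) ℝ).symm (A k *ᵥ xh k))
    (hLip : ∀ (k : ℕ) (a b : EuclideanSpace ℝ (Fin n)), ‖Φ k a - Φ k b‖ ≤ C * ‖a - b‖)
    (hmod : ∀ k, ‖Φ k (xh k) - (EuclideanSpace.equiv (Fin n) ℝ).symm (A k *ᵥ xh k)‖ ≤ η k) :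
    ∀ N : ℕ, ‖x N - xh N‖ ≤
      (1 + C) ^ N * ‖x 0 - xh 0‖ +
        ∑ k ∈ Finset.range N, (1 + C) ^ (N - 1 - k) * η k :=
  iterated_error_bound_general C hC x xh Φ A η hx hxh hLip hmod
end

section
/- Let X_m be a real N×m matrix with X_mᵀX_m invertible, let u ∈ ℝ^N, write X_m† = (X_mᵀX_m)⁻¹X_mᵀ, set d = ‖u‖² − uᵀ X_m (X_mᵀX_m)⁻¹ X_mᵀ u, assume d ≠ 0, set c = 1/d, and let X = [X_m, u] be the N×(m+1) matrix obtained by appending the column u. Then XᵀX is invertible and the pseudoinverse X† = (XᵀX)⁻¹Xᵀ is the (m+1)×N matrix whose first m rows form the matrix X_m† − c·(X_m† u)·((I − X_m X_m†)u)ᵀ and whose last row is c·((I − X_m X_m†)u)ᵀ. -/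
open scoped Matrix

/-- Append a column `u` to an `N × m` matrix, yielding an `N × (m+1)` matrix. -/
def appendCol {N m : ℕ} (X : Matrix (Fin N) (Fin m) ℝ) (u : Fin N → ℝ) :
    Matrix (Fin N) (Fin (m + 1)) ℝ :=
  Matrix.of fun i => Fin.snoc (X i) (u i)

/-- Append a row `z` to an `m × N` matrix, yielding an `(m+1) × N` matrix. -/
def appendRow {N m : ℕ} (Z : Matrix (Fin m) (Fin N) ℝ) (z : Fin N → ℝ) :
    Matrix (Fin (m + 1)) (Fin N) ℝ :=
  Matrix.of (Fin.snoc Z z)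

/-!
A left inverse `B` of `A` for which `A * B` is symmetric is the pseudoinverse: then
`Aᵀ A B = Aᵀ (A B)ᵀ = (A B A)ᵀ = Aᵀ`, and `B Bᵀ` is a right inverse of `Aᵀ A`.
For `A = [X, u]` and the proposed `B`, everything follows from the residual
`r = (1 - X X†) u` being orthogonal to the columns of `X` with `r ⬝ᵥ u = d`:
this makes `B` a left inverse of `A`, and `A B = X X† + c r rᵀ` is symmetric.
-/

open Matrix

namespace Matrix

variable {R : Type*} [CommRing R] {n m : Type*} [Fintype n] [Fintype m]

theorem isUnit_det_transpose_mul_self_and_eq_of_mul_eq_one [DecidableEq m]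
    {A : Matrix n m R} {B : Matrix m n R} (hBA : B * A = 1) (hAB : (A * B).IsSymm) :
    IsUnit (Aᵀ * A).det ∧ (Aᵀ * A)⁻¹ * Aᵀ = B := by
  have hnormal : Aᵀ * A * B = Aᵀ := by
    calc Aᵀ * A * B = Aᵀ * (A * B)ᵀ := by rw [Matrix.mul_assoc, hAB.eq]
      _ = (A * (B * A))ᵀ := by simp only [transpose_mul, Matrix.mul_assoc]
      _ = Aᵀ := by rw [hBA, Matrix.mul_one]
  have hunit : IsUnit (Aᵀ * A).det := by
    refine isUnit_det_of_right_inverse (B := B * Bᵀ) ?_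
    rw [← Matrix.mul_assoc, hnormal, ← transpose_mul, hBA, transpose_one]
  refine ⟨hunit, ?_⟩
  simpa only [hnormal] using nonsing_inv_mul_cancel_left (Aᵀ * A) B hunit

theorem isSymm_mul_inv_transpose_mul_self_mul_transpose [DecidableEq m] (X : Matrix n m R) :
    (X * ((Xᵀ * X)⁻¹ * Xᵀ)).IsSymm := by
  rw [IsSymm, transpose_mul, transpose_mul, transpose_nonsing_inv,
    transpose_mul, transpose_transpose, Matrix.mul_assoc]

theorem one_sub_mul_mulVec_vecMul_eq_zero [DecidableEq n] [DecidableEq m] {X : Matrix n m R}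
    {P : Matrix m n R} (hPX : P * X = 1) (hXP : (X * P).IsSymm) (u : n → R) :
    ((1 - X * P) *ᵥ u) ᵥ* X = 0 := by
  have hsymm : (1 - X * P)ᵀ = 1 - X * P := by rw [transpose_sub, transpose_one, hXP.eq]
  rw [← vecMul_transpose, hsymm, vecMul_vecMul, Matrix.sub_mul, Matrix.one_mul,
    Matrix.mul_assoc, hPX, Matrix.mul_one, sub_self, vecMul_zero]

end Matrix

section AppendColRow

variable {N m : ℕ} {X : Matrix (Fin N) (Fin m) ℝ} {Z : Matrix (Fin m) (Fin N) ℝ}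
  {u z : Fin N → ℝ}

@[simp] lemma appendCol_apply_castSucc (i : Fin N) (j : Fin m) :
    appendCol X u i j.castSucc = X i j := by
  simp [appendCol]

@[simp] lemma appendCol_apply_last (i : Fin N) : appendCol X u i (Fin.last m) = u i := by
  simp [appendCol]

@[simp] lemma appendRow_apply_castSucc (i : Fin m) (j : Fin N) :
    appendRow Z z i.castSucc j = Z i j := by
  simp [appendRow, Fin.snoc]

@[simp] lemma appendRow_apply_last (j : Fin N) : appendRow Z z (Fin.last m) j = z j := by
  simp [appendRow, Fin.snoc]

lemma appendCol_mul_appendRow : appendCol X u * appendRow Z z = X * Z + vecMulVec u z := by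
  ext i j
  simp [mul_apply, Fin.sum_univ_castSucc, vecMulVec_apply]

lemma appendRow_mul_appendCol_eq_one (hZX : Z * X = 1) (hZu : Z *ᵥ u = 0) (hzX : z ᵥ* X = 0)
    (hzu : z ⬝ᵥ u = 1) : appendRow Z z * appendCol X u = 1 := by
  ext i j
  refine Fin.lastCases ?_ (fun i => ?_) i <;> refine Fin.lastCases ?_ (fun j => ?_) j
  · simpa [mul_apply, dotProduct] using hzu
  · simpa [mul_apply, vecMul, dotProduct, one_apply, (Fin.castSucc_lt_last j).ne'] using
      congrFun hzX j
  · simpa [mul_apply, mulVec, dotProduct, one_apply] using congrFun hZu i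
  · simpa [mul_apply, one_apply] using congrFun₂ hZX i j

end AppendColRow

def pinvAppendCol {N m : ℕ} (X : Matrix (Fin N) (Fin m) ℝ) (P : Matrix (Fin m) (Fin N) ℝ)
    (u : Fin N → ℝ) (c : ℝ) : Matrix (Fin (m + 1)) (Fin N) ℝ :=
  appendRow (P - c • vecMulVec (P *ᵥ u) ((1 - X * P) *ᵥ u)) (c • ((1 - X * P) *ᵥ u))

section PinvAppendCol

variable {N m : ℕ} {X : Matrix (Fin N) (Fin m) ℝ} {P : Matrix (Fin m) (Fin N) ℝ}
  {u : Fin N → ℝ} {c : ℝ}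

lemma pinvAppendCol_mul_appendCol (hPX : P * X = 1) (hXP : (X * P).IsSymm)
    (hc : c * ((1 - X * P) *ᵥ u ⬝ᵥ u) = 1) : pinvAppendCol X P u c * appendCol X u = 1 := by
  have hr := one_sub_mul_mulVec_vecMul_eq_zero hPX hXP u
  apply appendRow_mul_appendCol_eq_one
  · rw [Matrix.sub_mul, hPX, smul_mul, vecMulVec_mul, hr, vecMulVec_zero, smul_zero,
      sub_zero]
  · rw [sub_mulVec, smul_mulVec, vecMulVec_mulVec, op_smul_eq_smul, smul_smul, hc,
      one_smul, sub_self]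
  · rw [smul_vecMul, hr, smul_zero]
  · rw [smul_dotProduct, smul_eq_mul, hc]

lemma appendCol_mul_pinvAppendCol :
    appendCol X u * pinvAppendCol X P u c =
      X * P + c • vecMulVec ((1 - X * P) *ᵥ u) ((1 - X * P) *ᵥ u) := by
  rw [pinvAppendCol, appendCol_mul_appendRow, Matrix.mul_sub, Matrix.mul_smul, mul_vecMulVec,
    vecMulVec_smul, sub_mulVec, one_mulVec, sub_vecMulVec, smul_sub, mulVec_mulVec]
  abel

lemma isSymm_appendCol_mul_pinvAppendCol (hXP : (X * P).IsSymm) :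
    (appendCol X u * pinvAppendCol X P u c).IsSymm := by
  rw [appendCol_mul_pinvAppendCol]
  exact hXP.add (IsSymm.smul (transpose_vecMulVec _ _) c)

end PinvAppendCol

/-- Lemma 5.4 (updating the pseudoinverse after appending a snapshot column). -/
theorem pseudoinverse_update {N m : ℕ} (Xm : Matrix (Fin N) (Fin m) ℝ)
    (u : EuclideanSpace ℝ (Fin N))
    (hinv : IsUnit (Xmᵀ * Xm).det)
    (d : ℝ) (hd : d = ‖u‖ ^ 2 - u ⬝ᵥ ((Xm * (Xmᵀ * Xm)⁻¹ * Xmᵀ) *ᵥ u))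
    (hd0 : d ≠ 0) (c : ℝ) (hc : c = 1 / d) :
    IsUnit ((appendCol Xm u)ᵀ * appendCol Xm u).det ∧
      ((appendCol Xm u)ᵀ * appendCol Xm u)⁻¹ * (appendCol Xm u)ᵀ =
        appendRow
          ((Xmᵀ * Xm)⁻¹ * Xmᵀ -
            c • Matrix.vecMulVec (((Xmᵀ * Xm)⁻¹ * Xmᵀ) *ᵥ u)
              ((1 - Xm * ((Xmᵀ * Xm)⁻¹ * Xmᵀ)) *ᵥ u))
          (c • ((1 - Xm * ((Xmᵀ * Xm)⁻¹ * Xmᵀ)) *ᵥ u)) := by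
  rw [Matrix.mul_assoc] at hd
  set P := (Xmᵀ * Xm)⁻¹ * Xmᵀ
  have hPX : P * Xm = 1 := by rw [Matrix.mul_assoc, nonsing_inv_mul _ hinv]
  have hXP : (Xm * P).IsSymm := isSymm_mul_inv_transpose_mul_self_mul_transpose Xm
  have hresidual : (1 - Xm * P) *ᵥ u ⬝ᵥ u = d := by
    rw [dotProduct_comm, sub_mulVec, one_mulVec, dotProduct_sub, hd,
      ← real_inner_self_eq_norm_sq, EuclideanSpace.inner_eq_star_dotProduct, star_trivial]
  have hcd : c * ((1 - Xm * P) *ᵥ u ⬝ᵥ u) = 1 := by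
    rw [hresidual, hc, one_div_mul_cancel hd0]
  exact isUnit_det_transpose_mul_self_and_eq_of_mul_eq_one
    (pinvAppendCol_mul_appendCol hPX hXP hcd) (isSymm_appendCol_mul_pinvAppendCol hXP)
end

section
/- Let X_m, Y_m be real N×m matrices, u, v ∈ ℝ^N with u ≠ 0 and X_mᵀu = 0, and σ > 0 with ‖X_m w‖ ≥ σ‖w‖ for all w ∈ ℝ^m, with X_mᵀX_m invertible. Write X_m† = (X_mᵀX_m)⁻¹X_mᵀ, let X = [X_m, u], Y = [Y_m, v], K = Y·(XᵀX)⁻¹Xᵀ and K_m = Y_m·X_m†. Then ‖K − K_m‖₂ ≤ (1/‖u‖)·√(1 + ‖u‖²/σ²)·√(‖Y_m‖₂² + ‖v‖²) + ‖v‖/σ. -/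
/-!
Because `u` is orthogonal to the columns of `Xₘ`, the Gram matrix of `X = [Xₘ, u]` is block
diagonal, `XᵀX = diag(XₘᵀXₘ, ‖u‖²)`, so deleting the last snapshot pair changes the DMD operator
by exactly the rank-one matrix `K - Kₘ = v uᵀ / ‖u‖²`, of spectral norm `‖v‖ / ‖u‖`. Both square
roots on the right-hand side dominate `1` and `‖v‖` respectively, so this is already bounded by
the first term.
-/

open scoped Matrix Matrix.Norms.L2Operator

open InnerProductSpace in
theorem Matrix.l2_opNorm_vecMulVec {𝕜 m n : Type*} [RCLike 𝕜] [Fintype m] [Fintype n]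
    [DecidableEq n] (x : EuclideanSpace 𝕜 m) (y : EuclideanSpace 𝕜 n) :
    ‖vecMulVec (⇑x) (star ⇑y)‖ = ‖x‖ * ‖y‖ := by
  rw [← symm_toEuclideanLin_rankOne, l2_opNorm_def, LinearEquiv.trans_apply,
    LinearEquiv.apply_symm_apply]
  exact norm_rankOne x y

section SnocDiag

open Matrix

variable {R : Type*} {m : ℕ}

def snocDiag [Zero R] (A : Matrix (Fin m) (Fin m) R) (c : R) :
    Matrix (Fin (m + 1)) (Fin (m + 1)) R :=
  of (Fin.snoc (fun i => Fin.snoc (A i) 0) (Fin.snoc 0 c))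

lemma snocDiag_mul_snocDiag [NonUnitalNonAssocSemiring R] (A B : Matrix (Fin m) (Fin m) R)
    (a b : R) : snocDiag A a * snocDiag B b = snocDiag (A * B) (a * b) := by
  ext i j
  refine Fin.lastCases ?_ (fun i => ?_) i <;> refine Fin.lastCases ?_ (fun j => ?_) j <;>
    simp [snocDiag, mul_apply, Fin.sum_univ_castSucc]

lemma snocDiag_one [Zero R] [One R] : snocDiag (1 : Matrix (Fin m) (Fin m) R) 1 = 1 := by
  ext i j
  refine Fin.lastCases ?_ (fun i => ?_) i <;> refine Fin.lastCases ?_ (fun j => ?_) j <;>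
    simp [snocDiag, one_apply, (Fin.castSucc_lt_last _).ne, (Fin.castSucc_lt_last _).ne']

lemma inv_snocDiag [Field R] {A : Matrix (Fin m) (Fin m) R} (hA : IsUnit A.det) {c : R}
    (hc : c ≠ 0) : (snocDiag A c)⁻¹ = snocDiag A⁻¹ c⁻¹ :=
  inv_eq_right_inv <| by
    rw [snocDiag_mul_snocDiag, mul_nonsing_inv A hA, mul_inv_cancel₀ hc, snocDiag_one]

end SnocDiag

section AppendCol

open Matrix

variable {N m : ℕ}

lemma transpose_appendCol_mul_self_of_mulVec_eq_zero {X : Matrix (Fin N) (Fin m) ℝ}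
    {u : Fin N → ℝ} (h : Xᵀ *ᵥ u = 0) :
    (appendCol X u)ᵀ * appendCol X u = snocDiag (Xᵀ * X) (u ⬝ᵥ u) := by
  have hXu : ∀ i, ∑ k, X k i * u k = 0 := fun i => by
    simpa [mulVec, dotProduct] using congrFun h i
  ext i j
  refine Fin.lastCases ?_ (fun i => ?_) i <;> refine Fin.lastCases ?_ (fun j => ?_) j <;>
    simp [appendCol, snocDiag, mul_apply, dotProduct, hXu, mul_comm]

lemma appendCol_mul_snocDiag (Y : Matrix (Fin N) (Fin m) ℝ) (v : Fin N → ℝ)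
    (A : Matrix (Fin m) (Fin m) ℝ) (c : ℝ) :
    appendCol Y v * snocDiag A c = appendCol (Y * A) (c • v) := by
  ext i j
  refine Fin.lastCases ?_ (fun j => ?_) j <;>
    simp [appendCol, snocDiag, mul_apply, Fin.sum_univ_castSucc, mul_comm]

lemma appendCol_mul_transpose_appendCol (X Y : Matrix (Fin N) (Fin m) ℝ) (u v : Fin N → ℝ) :
    appendCol Y v * (appendCol X u)ᵀ = Y * Xᵀ + vecMulVec v u := by
  ext i j
  simp [appendCol, mul_apply, Fin.sum_univ_castSucc, vecMulVec_apply]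

lemma appendCol_mul_pinv_sub_mul_pinv_of_mulVec_eq_zero {X : Matrix (Fin N) (Fin m) ℝ}
    (Y : Matrix (Fin N) (Fin m) ℝ) {u : Fin N → ℝ} (v : Fin N → ℝ) (hu : u ≠ 0)
    (huX : Xᵀ *ᵥ u = 0) (hX : IsUnit (Xᵀ * X).det) :
    appendCol Y v * (((appendCol X u)ᵀ * appendCol X u)⁻¹ * (appendCol X u)ᵀ) -
      Y * ((Xᵀ * X)⁻¹ * Xᵀ) = vecMulVec ((u ⬝ᵥ u)⁻¹ • v) u := by
  rw [transpose_appendCol_mul_self_of_mulVec_eq_zero huX,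
    inv_snocDiag hX (dotProduct_self_eq_zero.not.mpr hu), ← Matrix.mul_assoc,
    appendCol_mul_snocDiag, appendCol_mul_transpose_appendCol, Matrix.mul_assoc,
    add_sub_cancel_left]

end AppendCol

theorem opNorm_perturbation_column_deletion_orthogonal_general {N m : ℕ}
    (Xm Ym : Matrix (Fin N) (Fin m) ℝ)
    (u v : EuclideanSpace ℝ (Fin N)) (hu : u ≠ 0) (huX : Xmᵀ *ᵥ u = 0)
    (σ : ℝ) (hσ : 0 < σ)
    (hinv : IsUnit (Xmᵀ * Xm).det) :
    ‖appendCol Ym v * (((appendCol Xm u)ᵀ * appendCol Xm u)⁻¹ * (appendCol Xm u)ᵀ) -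
        Ym * ((Xmᵀ * Xm)⁻¹ * Xmᵀ)‖ ≤
      (1 / ‖u‖) * Real.sqrt (1 + ‖u‖ ^ 2 / σ ^ 2) * Real.sqrt (‖Ym‖ ^ 2 + ‖v‖ ^ 2) +
        ‖v‖ / σ := by
  have hdot : ⇑u ⬝ᵥ ⇑u = ‖u‖ ^ 2 := by
    rw [← real_inner_self_eq_norm_sq, EuclideanSpace.inner_eq_star_dotProduct, star_trivial]
  have hnorm : ‖Matrix.vecMulVec ((‖u‖ ^ 2)⁻¹ • ⇑v) ⇑u‖ = ‖v‖ / ‖u‖ := by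
    have := Matrix.l2_opNorm_vecMulVec ((‖u‖ ^ 2)⁻¹ • v) u
    rw [WithLp.ofLp_smul, star_trivial] at this
    rw [this, norm_smul, norm_inv, norm_pow, norm_norm]
    field_simp [norm_ne_zero_iff.mpr hu]
  have h1 : 1 ≤ √(1 + ‖u‖ ^ 2 / σ ^ 2) :=
    Real.one_le_sqrt.mpr (le_add_of_nonneg_right (by positivity))
  have h2 : ‖v‖ ≤ √(‖Ym‖ ^ 2 + ‖v‖ ^ 2) :=
    Real.le_sqrt_of_sq_le (le_add_of_nonneg_left (by positivity))
  rw [appendCol_mul_pinv_sub_mul_pinv_of_mulVec_eq_zero Ym ⇑v (by simpa using hu) huX hinv,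
    hdot, hnorm]
  calc ‖v‖ / ‖u‖ = 1 / ‖u‖ * 1 * ‖v‖ := by ring
    _ ≤ 1 / ‖u‖ * √(1 + ‖u‖ ^ 2 / σ ^ 2) * √(‖Ym‖ ^ 2 + ‖v‖ ^ 2) := by gcongr
    _ ≤ _ := le_add_of_nonneg_right (by positivity)

/-- Tightened case of Proposition 5.5 (operator 2-norm perturbation under column
deletion) when the appended snapshot `u` is orthogonal to the range of `Xₘ`. -/
theorem opNorm_perturbation_column_deletion_orthogonal {N m : ℕ}
    (Xm Ym : Matrix (Fin N) (Fin m) ℝ)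
    (u v : EuclideanSpace ℝ (Fin N)) (hu : u ≠ 0) (huX : Xmᵀ *ᵥ u = 0)
    (σ : ℝ) (hσ : 0 < σ)
    (hXmσ : ∀ w : EuclideanSpace ℝ (Fin m),
      σ * ‖w‖ ≤ ‖(EuclideanSpace.equiv (Fin N) ℝ).symm (Xm *ᵥ w)‖)
    (hinv : IsUnit (Xmᵀ * Xm).det) :
    ‖appendCol Ym v * (((appendCol Xm u)ᵀ * appendCol Xm u)⁻¹ * (appendCol Xm u)ᵀ) -
        Ym * ((Xmᵀ * Xm)⁻¹ * Xmᵀ)‖ ≤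
      (1 / ‖u‖) * Real.sqrt (1 + ‖u‖ ^ 2 / σ ^ 2) * Real.sqrt (‖Ym‖ ^ 2 + ‖v‖ ^ 2) +
        ‖v‖ / σ :=
  opNorm_perturbation_column_deletion_orthogonal_general Xm Ym u v hu huX σ hσ hinv
end

section
/- Let C be a real n×n matrix, γ > 0 with ‖C‖₂ ≤ γ, Δt ≥ 0, F ≥ 0, and f_1, …, f_m : ℝ → ℝ^n continuous functions with ‖f_i(s)‖ ≤ F for all s ∈ [0, Δt] and all i. Let X, Y be real n×m matrices whose columns satisfy y_i = exp(Δt·C)·x_i + ∫₀^{Δt} exp((Δt − s)·C)·f_i(s) ds for each i. Then ‖Y‖₂ ≤ e^{γΔt}·(‖X‖_F + √m·F/γ). -/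
open scoped Matrix Matrix.Norms.L2Operator

/-!
Since `‖exp (t • C)‖ ≤ e^{γt}`, each column of `Y` satisfies
`‖yᵢ‖ ≤ e^{γΔt} ‖xᵢ‖ + ∫₀^{Δt} e^{γ(Δt-s)} F ds ≤ e^{γΔt} (‖xᵢ‖ + F/γ)`.
The spectral norm of `Y` is at most its Frobenius norm, the Euclidean norm of the vector of
column norms, and Minkowski's inequality in `ℝᵐ` splits `(‖xᵢ‖ + F/γ)ᵢ` into `‖X‖_F` and `√m F/γ`.
-/

noncomputable def frobNorm {N m : ℕ} (A : Matrix (Fin N) (Fin m) ℝ) : ℝ :=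
  Real.sqrt (∑ i : Fin N, ∑ j : Fin m, A i j ^ 2)

open Nat in
theorem NormedSpace.norm_exp_le_exp_norm {𝔸 : Type*} [NormedRing 𝔸] [NormedAlgebra ℝ 𝔸]
    [NormOneClass 𝔸] [CompleteSpace 𝔸] (x : 𝔸) : ‖exp x‖ ≤ Real.exp ‖x‖ :=
  calc ‖exp x‖ = ‖∑' k, (k !⁻¹ : ℝ) • x ^ k‖ := by rw [exp_eq_tsum ℝ]
    _ ≤ ∑' k, ‖(k !⁻¹ : ℝ) • x ^ k‖ := norm_tsum_le_tsum_norm (norm_expSeries_summable' x)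
    _ ≤ ∑' k, ‖x‖ ^ k / k ! := by
      refine (norm_expSeries_summable' x).tsum_le_tsum (fun k => ?_)
        (Real.summable_pow_div_factorial _)
      rw [norm_smul, Real.norm_of_nonneg (by positivity), inv_mul_eq_div]
      gcongr
      exact norm_pow_le x k
    _ = Real.exp ‖x‖ := by rw [Real.exp_eq_exp_ℝ, exp_eq_tsum_div]

theorem integral_exp_mul_sub {γ : ℝ} (hγ : γ ≠ 0) (T : ℝ) :
    ∫ s in (0 : ℝ)..T, Real.exp (γ * (T - s)) = (Real.exp (γ * T) - 1) / γ := by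
  rw [intervalIntegral.integral_comp_sub_left (fun u => Real.exp (γ * u)), sub_self, sub_zero,
    intervalIntegral.integral_comp_mul_left Real.exp hγ, mul_zero, integral_exp, Real.exp_zero,
    smul_eq_mul, inv_mul_eq_div]

namespace Matrix

open NormedSpace

variable {n m : ℕ}

theorem l2_opNorm_exp_le (A : Matrix (Fin n) (Fin n) ℝ) : ‖exp A‖ ≤ Real.exp ‖A‖ := by
  -- for `n = 0` the norm of `1` is `0`, so there is no `NormOneClass` instance
  rcases subsingleton_or_nontrivial (Matrix (Fin n) (Fin n) ℝ) with h | h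
  · rw [Subsingleton.elim (exp A) 0, norm_zero]
    exact (Real.exp_pos _).le
  · exact norm_exp_le_exp_norm A

theorem l2_opNorm_exp_smul_le {C : Matrix (Fin n) (Fin n) ℝ} {γ t : ℝ} (hC : ‖C‖ ≤ γ)
    (ht : 0 ≤ t) : ‖exp (t • C)‖ ≤ Real.exp (γ * t) :=
  (l2_opNorm_exp_le _).trans <| Real.exp_le_exp.2 <| by
    rw [norm_smul, Real.norm_of_nonneg ht, mul_comm γ]
    gcongr

theorem norm_integral_exp_smul_mulVec_le {C : Matrix (Fin n) (Fin n) ℝ} {γ T F : ℝ}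
    (hγ : 0 < γ) (hC : ‖C‖ ≤ γ) (hT : 0 ≤ T) {g : ℝ → EuclideanSpace ℝ (Fin n)}
    (hg : ∀ s ∈ Set.Icc 0 T, ‖g s‖ ≤ F) :
    ‖∫ s in (0 : ℝ)..T, (EuclideanSpace.equiv (Fin n) ℝ).symm (exp ((T - s) • C) *ᵥ g s)‖ ≤
      F * (Real.exp (γ * T) - 1) / γ := by
  have hbound : ∀ s ∈ Set.Ioc 0 T,
      ‖(EuclideanSpace.equiv (Fin n) ℝ).symm (exp ((T - s) • C) *ᵥ g s)‖ ≤
        Real.exp (γ * (T - s)) * F := fun s hs =>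
    (l2_opNorm_mulVec _ _).trans <| mul_le_mul (l2_opNorm_exp_smul_le hC (sub_nonneg.2 hs.2))
      (hg s (Set.Ioc_subset_Icc_self hs)) (norm_nonneg _) (Real.exp_pos _).le
  calc _ ≤ ∫ s in (0 : ℝ)..T, Real.exp (γ * (T - s)) * F :=
        intervalIntegral.norm_integral_le_of_norm_le hT (.of_forall hbound)
          (by apply Continuous.intervalIntegrable; fun_prop)
    _ = F * (Real.exp (γ * T) - 1) / γ := by
        rw [intervalIntegral.integral_mul_const, integral_exp_mul_sub hγ.ne']
        ring

theorem norm_forced_flow_le {C : Matrix (Fin n) (Fin n) ℝ} {γ T F : ℝ} (hγ : 0 < γ)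
    (hC : ‖C‖ ≤ γ) (hT : 0 ≤ T) (hF : 0 ≤ F) (x : Fin n → ℝ) {g : ℝ → EuclideanSpace ℝ (Fin n)}
    (hg : ∀ s ∈ Set.Icc 0 T, ‖g s‖ ≤ F) :
    ‖(EuclideanSpace.equiv (Fin n) ℝ).symm (exp (T • C) *ᵥ x) +
        ∫ s in (0 : ℝ)..T, (EuclideanSpace.equiv (Fin n) ℝ).symm (exp ((T - s) • C) *ᵥ g s)‖ ≤
      Real.exp (γ * T) * (‖(EuclideanSpace.equiv (Fin n) ℝ).symm x‖ + F / γ) :=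
  calc _ ≤ Real.exp (γ * T) * ‖(EuclideanSpace.equiv (Fin n) ℝ).symm x‖ +
        F * (Real.exp (γ * T) - 1) / γ :=
        norm_add_le_of_le ((l2_opNorm_mulVec _ _).trans <|
            mul_le_mul_of_nonneg_right (l2_opNorm_exp_smul_le hC hT) (norm_nonneg _))
          (norm_integral_exp_smul_mulVec_le hγ hC hT hg)
    _ ≤ _ := by
        rw [mul_add, mul_div_assoc', mul_comm _ F]
        gcongr
        linarith

noncomputable def euclideanCol (A : Matrix (Fin n) (Fin m) ℝ) (j : Fin m) :
    EuclideanSpace ℝ (Fin n) :=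
  (EuclideanSpace.equiv (Fin n) ℝ).symm fun r => A r j

theorem frobNorm_eq_sqrt_sum_norm_euclideanCol_sq (A : Matrix (Fin n) (Fin m) ℝ) :
    frobNorm A = √(∑ j, ‖A.euclideanCol j‖ ^ 2) := by
  simp only [EuclideanSpace.real_norm_sq_eq]
  rw [frobNorm, Finset.sum_comm]
  rfl

theorem l2_opNorm_le_frobNorm (A : Matrix (Fin n) (Fin m) ℝ) : ‖A‖ ≤ frobNorm A := by
  refine ContinuousLinearMap.opNorm_le_bound _ (Real.sqrt_nonneg _) fun v => ?_
  refine (pow_le_pow_iff_left₀ (norm_nonneg _)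
    (mul_nonneg (Real.sqrt_nonneg _) (norm_nonneg _)) two_ne_zero).1 ?_
  rw [mul_pow, Real.sq_sqrt (by positivity), EuclideanSpace.real_norm_sq_eq,
    EuclideanSpace.real_norm_sq_eq, Finset.sum_mul]
  gcongr with r
  simpa [mulVec, dotProduct] using Finset.sum_mul_sq_le_sq_mul_sq Finset.univ (A r) v

theorem frobNorm_le_of_norm_euclideanCol_le {X Y : Matrix (Fin n) (Fin m) ℝ} {a c : ℝ}
    (ha : 0 ≤ a) (hc : 0 ≤ c) (h : ∀ j, ‖Y.euclideanCol j‖ ≤ a * (‖X.euclideanCol j‖ + c)) :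
    frobNorm Y ≤ a * (frobNorm X + √m * c) := by
  have norm_eq (x : EuclideanSpace ℝ (Fin m)) : ‖x‖ = √(∑ j, x j ^ 2) := by
    rw [← EuclideanSpace.real_norm_sq_eq, Real.sqrt_sq (norm_nonneg x)]
  set u : EuclideanSpace ℝ (Fin m) := WithLp.toLp 2 fun j => ‖X.euclideanCol j‖
  set w : EuclideanSpace ℝ (Fin m) := WithLp.toLp 2 fun _ => c
  have hu : ‖u‖ = frobNorm X := by
    rw [norm_eq, frobNorm_eq_sqrt_sum_norm_euclideanCol_sq]
  have hw : ‖w‖ = √m * c := by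
    simp [norm_eq, w, Real.sqrt_mul, Real.sqrt_sq hc]
  calc frobNorm Y = √(∑ j, ‖Y.euclideanCol j‖ ^ 2) :=
        frobNorm_eq_sqrt_sum_norm_euclideanCol_sq Y
    _ ≤ √(∑ j, ((a • (u + w)) j) ^ 2) := by
        gcongr with j
        exact h j
    _ = a * ‖u + w‖ := by rw [← norm_eq, norm_smul, Real.norm_of_nonneg ha]
    _ ≤ a * (frobNorm X + √m * c) := by
        rw [← hu, ← hw]
        gcongr
        exact norm_add_le u w

end Matrix

open Matrix in
theorem time_shift_norm_upper_bound_general {n m : ℕ} (C : Matrix (Fin n) (Fin n) ℝ)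
    (γ : ℝ) (hγ : 0 < γ) (hC : ‖C‖ ≤ γ) (Δt : ℝ) (hΔt : 0 ≤ Δt)
    (F : ℝ) (hF : 0 ≤ F)
    (f : Fin m → ℝ → EuclideanSpace ℝ (Fin n))
    (hfF : ∀ i, ∀ s ∈ Set.Icc (0 : ℝ) Δt, ‖f i s‖ ≤ F)
    (X Y : Matrix (Fin n) (Fin m) ℝ)
    (hcol : ∀ i : Fin m,
      (EuclideanSpace.equiv (Fin n) ℝ).symm (fun r => Y r i) =
        (EuclideanSpace.equiv (Fin n) ℝ).symm
            (NormedSpace.exp (Δt • C) *ᵥ fun r => X r i) +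
          ∫ s in (0 : ℝ)..Δt,
            (EuclideanSpace.equiv (Fin n) ℝ).symm
              (NormedSpace.exp ((Δt - s) • C) *ᵥ f i s)) :
    ‖Y‖ ≤ Real.exp (γ * Δt) * (frobNorm X + Real.sqrt (m : ℝ) * F / γ) := by
  have hcol_le (i : Fin m) :
      ‖Y.euclideanCol i‖ ≤ Real.exp (γ * Δt) * (‖X.euclideanCol i‖ + F / γ) := by
    rw [euclideanCol, hcol i]
    exact norm_forced_flow_le hγ hC hΔt hF _ (hfF i)
  calc ‖Y‖ ≤ frobNorm Y := Y.l2_opNorm_le_frobNorm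
    _ ≤ Real.exp (γ * Δt) * (frobNorm X + √m * (F / γ)) :=
        frobNorm_le_of_norm_euclideanCol_le (Real.exp_pos _).le (div_nonneg hF hγ.le) hcol_le
    _ = _ := by rw [mul_div_assoc]

/-- Proposition 5.7 (time-shift norm upper bound) for the linear system
`du/dt = C u + f(t)` with constant coefficient matrix `C`:
`‖Y‖₂ ≤ e^{γ Δt} (‖X‖_F + √m F/γ)`. -/
theorem time_shift_norm_upper_bound {n m : ℕ} (C : Matrix (Fin n) (Fin n) ℝ)
    (γ : ℝ) (hγ : 0 < γ) (hC : ‖C‖ ≤ γ) (Δt : ℝ) (hΔt : 0 ≤ Δt)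
    (F : ℝ) (hF : 0 ≤ F)
    (f : Fin m → ℝ → EuclideanSpace ℝ (Fin n)) (hf : ∀ i, Continuous (f i))
    (hfF : ∀ i, ∀ s ∈ Set.Icc (0 : ℝ) Δt, ‖f i s‖ ≤ F)
    (X Y : Matrix (Fin n) (Fin m) ℝ)
    (hcol : ∀ i : Fin m,
      (EuclideanSpace.equiv (Fin n) ℝ).symm (fun r => Y r i) =
        (EuclideanSpace.equiv (Fin n) ℝ).symm
            (NormedSpace.exp (Δt • C) *ᵥ fun r => X r i) +
          ∫ s in (0 : ℝ)..Δt,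
            (EuclideanSpace.equiv (Fin n) ℝ).symm
              (NormedSpace.exp ((Δt - s) • C) *ᵥ f i s)) :
    ‖Y‖ ≤ Real.exp (γ * Δt) * (frobNorm X + Real.sqrt (m : ℝ) * F / γ) :=
  time_shift_norm_upper_bound_general C γ hγ hC Δt hΔt F hF f hfF X Y hcol
end
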